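/- arXiv:2105.06199 — 4 statements merged into one kernel-verified Lean document; each statement's English description precedes it below -/
import Mathlib

section
/- If only the initial cooperation probability p₀ of player X is varied, then the payoffs π_X and π_Y are affine (linear) functions of the variation parameter z, so the set {(ψ₀(z), φ₀(z)) : z ∈ [-p₀, 1-p₀]} is a line segment and both φ₀ and ψ₀ are monotone in z. -/
open Matrix Filter

noncomputable section

/-- Row of the transition matrix for cooperation probabilities `a` (player X) and `b` (player Y). -/
def row2 (a b : ℝ) : Fin 4 → ℝ := ![a * b, a * (1 - b), (1 - a) * b, (1 - a) * (1 - b)]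

/-- Initial distribution over the four states CC, CD, DC, DD. -/
def nu0 (p q : Fin 5 → ℝ) : Fin 4 → ℝ := row2 (p 0) (q 0)

/-- Transition matrix `M(p,q)` of the repeated game for memory-one strategies. -/
def Mmat (p q : Fin 5 → ℝ) : Matrix (Fin 4) (Fin 4) ℝ :=
  Matrix.of ![row2 (p 1) (q 1), row2 (p 2) (q 3), row2 (p 3) (q 2), row2 (p 4) (q 4)]

/-- Discounted average state distribution `v = (1-λ)·ν₀·(I - λM)⁻¹`. -/
def vdist (lam : ℝ) (p q : Fin 5 → ℝ) : Fin 4 → ℝ :=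
  (1 - lam) • Matrix.vecMul (nu0 p q) (1 - lam • Mmat p q)⁻¹

/-- A memory-one strategy: all five entries lie in `[0,1]`. -/
def inCube (p : Fin 5 → ℝ) : Prop := ∀ i, p i ∈ Set.Icc (0:ℝ) 1

/-- Discounted repeated-game payoff with one-shot payoff vector `u`. -/
def pay (lam : ℝ) (p q : Fin 5 → ℝ) (u : Fin 4 → ℝ) : ℝ :=
  dotProduct (vdist lam p q) u

/-- One-shot payoff vector of player X. -/
def uvecX (R S T P : ℝ) : Fin 4 → ℝ := ![R, S, T, P]

/-- One-shot payoff vector of player Y. -/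
def uvecY (R S T P : ℝ) : Fin 4 → ℝ := ![R, T, S, P]

def wvec (b : ℝ) : Fin 4 → ℝ := ![b, 1 - b, -b, -(1 - b)]

lemma row2_shift (a z b : ℝ) : row2 (a + z) b = row2 a b + z • wvec b := by
  funext i; fin_cases i <;> simp [row2, wvec] <;> ring

lemma Mmat_shift (p q : Fin 5 → ℝ) (z : ℝ) :
    Mmat (p + z • (Pi.single 0 1 : Fin 5 → ℝ)) q = Mmat p q := by
  have h : ∀ i : Fin 5, i ≠ 0 → (p + z • (Pi.single 0 1 : Fin 5 → ℝ)) i = p i := fun i hi => by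
    simp [Pi.single_eq_of_ne hi]
  unfold Mmat
  rw [h 1 (by decide), h 2 (by decide), h 3 (by decide), h 4 (by decide)]

lemma pay_shift (lam z : ℝ) (p q : Fin 5 → ℝ) (u : Fin 4 → ℝ) :
    pay lam (p + z • (Pi.single 0 1 : Fin 5 → ℝ)) q u =
      ((1 - lam) * dotProduct (vecMul (wvec (q 0)) (1 - lam • Mmat p q)⁻¹) u) * z
        + pay lam p q u := by
  have h0 : (p + z • (Pi.single 0 1 : Fin 5 → ℝ)) 0 = p 0 + z := by simp
  unfold pay vdist nu0
  rw [Mmat_shift, h0, row2_shift]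
  rw [Matrix.add_vecMul, Matrix.smul_vecMul]
  simp [add_dotProduct, smul_dotProduct]
  ring

theorem varying_initial_probability_is_affine
    (R S T P lam : ℝ) (hlam : lam ∈ Set.Ico (0:ℝ) 1)
    (p q : Fin 5 → ℝ) (hp : inCube p) (hq : inCube q)
    (φ ψ : ℝ → ℝ)
    (hφ : ∀ z, φ z = pay lam (p + z • (Pi.single 0 1 : Fin 5 → ℝ)) q (uvecX R S T P))
    (hψ : ∀ z, ψ z = pay lam (p + z • (Pi.single 0 1 : Fin 5 → ℝ)) q (uvecY R S T P)) :
    (∃ a b c d : ℝ, ∀ z ∈ Set.Icc (-(p 0)) (1 - p 0),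
        φ z = a * z + b ∧ ψ z = c * z + d) ∧
    ((fun z => (ψ z, φ z)) '' Set.Icc (-(p 0)) (1 - p 0) ⊆
        segment ℝ (ψ (-(p 0)), φ (-(p 0))) (ψ (1 - p 0), φ (1 - p 0))) ∧
    (MonotoneOn φ (Set.Icc (-(p 0)) (1 - p 0)) ∨ AntitoneOn φ (Set.Icc (-(p 0)) (1 - p 0))) ∧
    (MonotoneOn ψ (Set.Icc (-(p 0)) (1 - p 0)) ∨ AntitoneOn ψ (Set.Icc (-(p 0)) (1 - p 0))) := by
  set cX := (1 - lam) * dotProduct (vecMul (wvec (q 0)) (1 - lam • Mmat p q)⁻¹) (uvecX R S T P)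
    with hcX
  set cY := (1 - lam) * dotProduct (vecMul (wvec (q 0)) (1 - lam • Mmat p q)⁻¹) (uvecY R S T P)
    with hcY
  have hφ' : ∀ z, φ z = cX * z + pay lam p q (uvecX R S T P) := fun z => by
    rw [hφ z, pay_shift]
  have hψ' : ∀ z, ψ z = cY * z + pay lam p q (uvecY R S T P) := fun z => by
    rw [hψ z, pay_shift]
  refine ⟨⟨cX, pay lam p q (uvecX R S T P), cY, pay lam p q (uvecY R S T P),
      fun z _ => ⟨hφ' z, hψ' z⟩⟩, ?_, ?_, ?_⟩
  · rintro _ ⟨z, hz, rfl⟩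
    dsimp only
    refine ⟨1 - (z + p 0), z + p 0, by linarith [hz.2], by linarith [hz.1], by ring, ?_⟩
    rw [hφ' z, hψ' z, hφ' (-(p 0)), hψ' (-(p 0)), hφ' (1 - p 0), hψ' (1 - p 0)]
    simp only [Prod.smul_mk, Prod.mk_add_mk, Prod.mk.injEq, smul_eq_mul]
    constructor <;> ring
  · rcases le_total 0 cX with h | h
    · exact Or.inl fun x _ y _ hxy => by rw [hφ' x, hφ' y]; nlinarith
    · exact Or.inr fun x _ y _ hxy => by rw [hφ' x, hφ' y]; nlinarith
  · rcases le_total 0 cY with h | h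
    · exact Or.inl fun x _ y _ hxy => by rw [hψ' x, hψ' y]; nlinarith
    · exact Or.inr fun x _ y _ hxy => by rw [hψ' x, hψ' y]; nlinarith
end
end

section
/- Let V_κ(p,q) = κ_X·π_X(p,q) + κ_Y·π_Y(p,q) be a weighted payoff objective. Suppose player X's strategy p lies in the open cube (0,1)⁵, q ∈ [0,1]⁵, and p is not a best response with respect to V_κ (i.e., V_κ(p,q) < max over p' of V_κ(p',q)). If along each coordinate-line through p the function V_κ is either monotone or constant, and the restriction of V_κ to the segment from p to a best response p* is a rational function of the interpolation parameter, then for every d > 0 there exists p' with ‖p'-p‖ < d and V_κ(p',q) > V_κ(p,q). In other words, player X can locally improve its objective. -/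
open Matrix Filter

noncomputable section

/- ===== auxiliary lemmas ===== -/

lemma det_one_sub_smul_ne_zero (lam : ℝ) (h0 : 0 ≤ lam) (h1 : lam < 1)
    (M : Matrix (Fin 4) (Fin 4) ℝ) (hM : ∀ i j, 0 ≤ M i j) (hrow : ∀ i, ∑ j, M i j = 1) :
    ((1 : Matrix (Fin 4) (Fin 4) ℝ) - lam • M).det ≠ 0 := by
  intro hdet
  obtain ⟨v, hv0, hAv⟩ := (Matrix.exists_mulVec_eq_zero_iff).mpr hdet
  obtain ⟨i, -, hi⟩ := Finset.exists_max_image Finset.univ (fun j => |v j|) ⟨0, Finset.mem_univ 0⟩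
  have hvi : 0 < |v i| := by
    obtain ⟨j, hj⟩ := Function.ne_iff.mp hv0
    exact lt_of_lt_of_le (abs_pos.mpr hj) (hi j (Finset.mem_univ j))
  have hvm : ∀ j, |v j| ≤ |v i| := fun j => hi j (Finset.mem_univ j)
  have heq : v i = lam * ∑ j, M i j * v j := by
    have := congrFun hAv i
    simp only [Matrix.sub_mulVec, Matrix.one_mulVec, Matrix.smul_mulVec,
      Pi.sub_apply, Pi.smul_apply, Pi.zero_apply, smul_eq_mul] at this
    have h2 : (M *ᵥ v) i = ∑ j, M i j * v j := rfl
    linarith [this, h2 ▸ this]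
  have hb : |v i| ≤ lam * |v i| := by
    calc |v i| = lam * |∑ j, M i j * v j| := by rw [heq, abs_mul, abs_of_nonneg h0]
    _ ≤ lam * ∑ j, |M i j * v j| := by
        exact mul_le_mul_of_nonneg_left (Finset.abs_sum_le_sum_abs _ _) h0
    _ ≤ lam * ∑ j, M i j * |v i| := by
        apply mul_le_mul_of_nonneg_left _ h0
        apply Finset.sum_le_sum
        intro j _
        rw [abs_mul, abs_of_nonneg (hM i j)]
        exact mul_le_mul_of_nonneg_left (hvm j) (hM i j)
    _ = lam * |v i| := by rw [← Finset.sum_mul, hrow i, one_mul]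
  nlinarith

lemma det_updateRow_eq_sum (A : Matrix (Fin 4) (Fin 4) ℝ) (j : Fin 4) (w : Fin 4 → ℝ) :
    (A.updateRow j w).det = ∑ k, w k * (A.updateRow j (Pi.single k 1)).det := by
  let L : (Fin 4 → ℝ) →ₗ[ℝ] ℝ :=
    { toFun := fun u => (A.updateRow j u).det
      map_add' := fun u v => Matrix.det_updateRow_add A j u v
      map_smul' := fun c u => Matrix.det_updateRow_smul A j c u }
  have h1 : (A.updateRow j w).det = L w := rfl
  have h2 : w = ∑ k, (w k) • (Pi.single k (1:ℝ) : Fin 4 → ℝ) := by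
    funext m
    simp [Pi.single_apply, Finset.sum_apply]
  rw [h1]
  conv_lhs => rw [h2]
  rw [map_sum]
  apply Finset.sum_congr rfl
  intro k _
  rw [_root_.map_smul]
  simp [L]

def Amat (lam : ℝ) (q r : Fin 5 → ℝ) : Matrix (Fin 4) (Fin 4) ℝ := 1 - lam • Mmat r q
def dfunc (lam : ℝ) (q r : Fin 5 → ℝ) : ℝ := (Amat lam q r).det
def nfunc (lam κX κY R S T P : ℝ) (q r : Fin 5 → ℝ) : ℝ :=
  (1 - lam) * ∑ j, ((Amat lam q r).updateRow j (nu0 r q)).det *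
    (κX * uvecX R S T P j + κY * uvecY R S T P j)

lemma V_repr (lam κX κY R S T P : ℝ) (q r : Fin 5 → ℝ) :
    κX * pay lam r q (uvecX R S T P) + κY * pay lam r q (uvecY R S T P)
      = nfunc lam κX κY R S T P q r / dfunc lam q r := by
  have hv : ∀ j, vdist lam r q j
      = (1 - lam) * ((dfunc lam q r)⁻¹ * ((Amat lam q r).updateRow j (nu0 r q)).det) := by
    intro j
    have hinv : (Amat lam q r)⁻¹ = (dfunc lam q r)⁻¹ • (Amat lam q r).adjugate := by
      rw [Matrix.inv_def, Ring.inverse_eq_inv']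
      rfl
    have : vdist lam r q j = (1 - lam) * ∑ i, nu0 r q i * ((Amat lam q r)⁻¹ i j) := by
      simp [vdist, Matrix.vecMul, dotProduct, Amat]
    rw [this, hinv]
    rw [det_updateRow_eq_sum]
    simp only [Matrix.smul_apply, smul_eq_mul, Matrix.adjugate_apply]
    rw [Fin.sum_univ_four, Fin.sum_univ_four]
    ring
  have hpay : ∀ u : Fin 4 → ℝ, pay lam r q u
      = (dfunc lam q r)⁻¹ * ((1 - lam) * ∑ j, ((Amat lam q r).updateRow j (nu0 r q)).det * u j) := by
    intro u
    simp only [pay, dotProduct]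
    rw [Finset.mul_sum, Finset.mul_sum]
    apply Finset.sum_congr rfl
    intro j _
    rw [hv j]; ring
  rw [hpay, hpay, nfunc, div_eq_inv_mul]
  rw [Fin.sum_univ_four, Fin.sum_univ_four, Fin.sum_univ_four]
  ring

lemma row2_decomp (t b : ℝ) : row2 t b = row2 0 b + t • wvec b := by
  funext j; fin_cases j <;> simp [row2, wvec] <;> ring

lemma updateRow_updateRow (A : Matrix (Fin 4) (Fin 4) ℝ) (k : Fin 4) (u v : Fin 4 → ℝ) :
    (A.updateRow k u).updateRow k v = A.updateRow k v := by
  ext m j; by_cases h : m = k <;> simp [Matrix.updateRow_apply, h]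

lemma updateRow_comm' (A : Matrix (Fin 4) (Fin 4) ℝ) {k j : Fin 4} (h : j ≠ k) (u v : Fin 4 → ℝ) :
    (A.updateRow k u).updateRow j v = (A.updateRow j v).updateRow k u := by
  ext m l
  by_cases h1 : m = j <;> by_cases h2 : m = k <;>
    simp [Matrix.updateRow_apply, h1, h2, h, Ne.symm h]

lemma one_sub_smul_updateRow (M : Matrix (Fin 4) (Fin 4) ℝ) (lam : ℝ) (k : Fin 4) (ρ : Fin 4 → ℝ) :
    (1 : Matrix (Fin 4) (Fin 4) ℝ) - lam • (M.updateRow k ρ)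
      = ((1 : Matrix (Fin 4) (Fin 4) ℝ) - lam • M).updateRow k (Pi.single k 1 - lam • ρ) := by
  ext m j
  by_cases h : m = k <;>
    simp [Matrix.updateRow_apply, h, Matrix.one_apply, Pi.single_apply, eq_comm]

lemma single_sub_lam_row2 (lam b : ℝ) (k : Fin 4) (t : ℝ) :
    Pi.single k (1:ℝ) - lam • row2 t b
      = (Pi.single k 1 - lam • row2 0 b) + t • ((-lam) • wvec b) := by
  rw [row2_decomp]
  funext j
  simp only [Pi.sub_apply, Pi.add_apply, Pi.smul_apply, smul_eq_mul]
  ring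

lemma Mmat_update1 (r q : Fin 5 → ℝ) (t : ℝ) :
    Mmat (Function.update r 1 t) q = (Mmat r q).updateRow 0 (row2 t (q 1)) := by
  ext m j
  fin_cases m <;> simp [Mmat, Matrix.updateRow_apply, Function.update_apply]

lemma Mmat_update2 (r q : Fin 5 → ℝ) (t : ℝ) :
    Mmat (Function.update r 2 t) q = (Mmat r q).updateRow 1 (row2 t (q 3)) := by
  ext m j
  fin_cases m <;> simp [Mmat, Matrix.updateRow_apply, Function.update_apply]

lemma Mmat_update3 (r q : Fin 5 → ℝ) (t : ℝ) :
    Mmat (Function.update r 3 t) q = (Mmat r q).updateRow 2 (row2 t (q 2)) := by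
  ext m j
  fin_cases m <;> simp [Mmat, Matrix.updateRow_apply, Function.update_apply]

lemma Mmat_update4 (r q : Fin 5 → ℝ) (t : ℝ) :
    Mmat (Function.update r 4 t) q = (Mmat r q).updateRow 3 (row2 t (q 4)) := by
  ext m j
  fin_cases m <;> simp [Mmat, Matrix.updateRow_apply, Function.update_apply]

lemma Mmat_update0 (r q : Fin 5 → ℝ) (t : ℝ) :
    Mmat (Function.update r 0 t) q = Mmat r q := by
  simp [Mmat, Function.update_apply]

lemma nu0_update0 (r q : Fin 5 → ℝ) (t : ℝ) :
    nu0 (Function.update r 0 t) q = row2 t (q 0) := by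
  simp [nu0]

lemma nu0_update_ne (r q : Fin 5 → ℝ) (i : Fin 5) (hi : i ≠ 0) (t : ℝ) :
    nu0 (Function.update r i t) q = nu0 r q := by
  simp [nu0, Function.update_apply, (Ne.symm hi)]

lemma affine_of_rowupdate (lam κX κY R S T P : ℝ) (q r : Fin 5 → ℝ) (i : Fin 5) (k : Fin 4) (b : ℝ)
    (hM : ∀ t, Mmat (Function.update r i t) q = (Mmat r q).updateRow k (row2 t b))
    (hν : ∀ t, nu0 (Function.update r i t) q = nu0 r q) :
    ∃ a₁ b₁ c₁ e₁ : ℝ,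
      (∀ t, nfunc lam κX κY R S T P q (Function.update r i t) = a₁ + t * b₁) ∧
      (∀ t, dfunc lam q (Function.update r i t) = c₁ + t * e₁) := by
  set A0 := Amat lam q r with hA0
  set u0 : Fin 4 → ℝ := Pi.single k 1 - lam • row2 0 b with hu0
  set v0 : Fin 4 → ℝ := (-lam) • wvec b with hv0
  have hA : ∀ t, Amat lam q (Function.update r i t) = A0.updateRow k (u0 + t • v0) := by
    intro t
    rw [Amat, hM t, one_sub_smul_updateRow, single_sub_lam_row2]
    rfl
  have hj : ∀ j : Fin 4, ∃ a b : ℝ, ∀ t,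
      ((Amat lam q (Function.update r i t)).updateRow j (nu0 (Function.update r i t) q)).det
        = a + t * b := by
    intro j
    by_cases hjk : j = k
    · subst hjk
      refine ⟨(A0.updateRow j (nu0 r q)).det, 0, fun t => ?_⟩
      rw [hA t, hν t, updateRow_updateRow]
      ring
    · refine ⟨((A0.updateRow j (nu0 r q)).updateRow k u0).det,
        ((A0.updateRow j (nu0 r q)).updateRow k v0).det, fun t => ?_⟩
      rw [hA t, hν t, updateRow_comm' _ hjk, Matrix.det_updateRow_add,
        Matrix.det_updateRow_smul]
  choose a b hab using hj
  refine ⟨(1 - lam) * ∑ j, a j * (κX * uvecX R S T P j + κY * uvecY R S T P j),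
    (1 - lam) * ∑ j, b j * (κX * uvecX R S T P j + κY * uvecY R S T P j),
    (A0.updateRow k u0).det, (A0.updateRow k v0).det, fun t => ?_, fun t => ?_⟩
  · rw [nfunc]
    simp only [hab]
    rw [Fin.sum_univ_four, Fin.sum_univ_four, Fin.sum_univ_four]
    ring
  · rw [dfunc, hA t, Matrix.det_updateRow_add, Matrix.det_updateRow_smul]

lemma affine_nd0 (lam κX κY R S T P : ℝ) (q r : Fin 5 → ℝ) :
    ∃ a₁ b₁ c₁ e₁ : ℝ,
      (∀ t, nfunc lam κX κY R S T P q (Function.update r 0 t) = a₁ + t * b₁) ∧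
      (∀ t, dfunc lam q (Function.update r 0 t) = c₁ + t * e₁) := by
  have hAm : ∀ t, Amat lam q (Function.update r 0 t) = Amat lam q r := by
    intro t; rw [Amat, Mmat_update0]; rfl
  have hν : ∀ t, nu0 (Function.update r 0 t) q = row2 0 (q 0) + t • wvec (q 0) := by
    intro t; rw [nu0_update0, row2_decomp]
  refine ⟨(1 - lam) * ∑ j, ((Amat lam q r).updateRow j (row2 0 (q 0))).det *
      (κX * uvecX R S T P j + κY * uvecY R S T P j),
    (1 - lam) * ∑ j, ((Amat lam q r).updateRow j (wvec (q 0))).det *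
      (κX * uvecX R S T P j + κY * uvecY R S T P j),
    dfunc lam q r, 0, fun t => ?_, fun t => ?_⟩
  · rw [nfunc]
    simp only [hAm, hν, Matrix.det_updateRow_add, Matrix.det_updateRow_smul]
    rw [Fin.sum_univ_four, Fin.sum_univ_four, Fin.sum_univ_four]
    ring
  · simp only [dfunc, hAm t, mul_zero, add_zero]

lemma affine_nd (lam κX κY R S T P : ℝ) (q r : Fin 5 → ℝ) (i : Fin 5) :
    ∃ a₁ b₁ c₁ e₁ : ℝ,
      (∀ t, nfunc lam κX κY R S T P q (Function.update r i t) = a₁ + t * b₁) ∧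
      (∀ t, dfunc lam q (Function.update r i t) = c₁ + t * e₁) := by
  fin_cases i
  · exact affine_nd0 lam κX κY R S T P q r
  · exact affine_of_rowupdate lam κX κY R S T P q r 1 0 (q 1) (Mmat_update1 r q)
      (nu0_update_ne r q 1 (by decide))
  · exact affine_of_rowupdate lam κX κY R S T P q r 2 1 (q 3) (Mmat_update2 r q)
      (nu0_update_ne r q 2 (by decide))
  · exact affine_of_rowupdate lam κX κY R S T P q r 3 2 (q 2) (Mmat_update3 r q)
      (nu0_update_ne r q 3 (by decide))
  · exact affine_of_rowupdate lam κX κY R S T P q r 4 3 (q 4) (Mmat_update4 r q)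
      (nu0_update_ne r q 4 (by decide))

lemma row2_bounds (a b : ℝ) (ha1 : 0 ≤ a) (ha2 : a ≤ 1) (hb1 : 0 ≤ b) (hb2 : b ≤ 1) :
    (∀ j, 0 ≤ row2 a b j) ∧ (∑ j, row2 a b j = 1) := by
  constructor
  · intro j; fin_cases j <;> simp [row2] <;> nlinarith
  · rw [Fin.sum_univ_four]; simp [row2]; ring

lemma Mmat_bounds (r q : Fin 5 → ℝ) (hr : inCube r) (hq : inCube q) :
    (∀ i j, 0 ≤ Mmat r q i j) ∧ (∀ i, ∑ j, Mmat r q i j = 1) := by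
  constructor
  · intro i j
    fin_cases i
    · exact (row2_bounds _ _ (hr 1).1 (hr 1).2 (hq 1).1 (hq 1).2).1 j
    · exact (row2_bounds _ _ (hr 2).1 (hr 2).2 (hq 3).1 (hq 3).2).1 j
    · exact (row2_bounds _ _ (hr 3).1 (hr 3).2 (hq 2).1 (hq 2).2).1 j
    · exact (row2_bounds _ _ (hr 4).1 (hr 4).2 (hq 4).1 (hq 4).2).1 j
  · intro i
    fin_cases i
    · exact (row2_bounds _ _ (hr 1).1 (hr 1).2 (hq 1).1 (hq 1).2).2
    · exact (row2_bounds _ _ (hr 2).1 (hr 2).2 (hq 3).1 (hq 3).2).2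
    · exact (row2_bounds _ _ (hr 3).1 (hr 3).2 (hq 2).1 (hq 2).2).2
    · exact (row2_bounds _ _ (hr 4).1 (hr 4).2 (hq 4).1 (hq 4).2).2

lemma dfunc_ne_zero (lam : ℝ) (h0 : 0 ≤ lam) (h1 : lam < 1) (q r : Fin 5 → ℝ)
    (hr : inCube r) (hq : inCube q) : dfunc lam q r ≠ 0 := by
  obtain ⟨hM, hrow⟩ := Mmat_bounds r q hr hq
  exact det_one_sub_smul_ne_zero lam h0 h1 (Mmat r q) hM hrow

lemma mobius_key (nf df : ℝ → ℝ) (a b c e : ℝ)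
    (hn : ∀ t, nf t = a + t * b) (hd : ∀ t, df t = c + t * e)
    (hne : ∀ t ∈ Set.Icc (0:ℝ) 1, df t ≠ 0)
    (t0 δ : ℝ) (hδ : 0 < δ) (ht0l : 0 ≤ t0 - δ) (ht0r : t0 + δ ≤ 1)
    (hmax : ∀ t ∈ Set.Icc (t0-δ) (t0+δ), nf t / df t ≤ nf t0 / df t0) :
    ∀ t ∈ Set.Icc (0:ℝ) 1, nf t / df t = nf t0 / df t0 := by
  have ht0mem : t0 ∈ Set.Icc (0:ℝ) 1 := ⟨by linarith, by linarith⟩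
  have hc : Continuous df := by
    have : df = fun t => a * 0 + (c + t * e) := by funext t; rw [hd t]; ring
    rw [this]; fun_prop
  have hsign : ∀ t ∈ Set.Icc (0:ℝ) 1, 0 < df t * df t0 := by
    intro t ht
    rcases lt_trichotomy (df t * df t0) 0 with hlt | heq | hgt
    · exfalso
      have h0mem : (0:ℝ) ∈ Set.uIcc (df t) (df t0) := by
        rcases mul_neg_iff.mp hlt with ⟨h1, h2⟩ | ⟨h1, h2⟩
        · exact Set.mem_uIcc.mpr (Or.inr ⟨le_of_lt h2, le_of_lt h1⟩)
        · exact Set.mem_uIcc.mpr (Or.inl ⟨le_of_lt h1, le_of_lt h2⟩)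
      obtain ⟨s, hsmem, hs0⟩ := intermediate_value_uIcc (hc.continuousOn) h0mem
      have hsub : Set.uIcc t t0 ⊆ Set.Icc (0:ℝ) 1 := by
        rw [Set.uIcc]
        exact Set.Icc_subset_Icc (le_inf ht.1 ht0mem.1) (sup_le ht.2 ht0mem.2)
      exact hne s (hsub hsmem) hs0
    · exact absurd (mul_eq_zero.mp heq) (by push_neg; exact ⟨hne t ht, hne t0 ht0mem⟩)
    · exact hgt
  set β := b * df t0 - nf t0 * e with hβdef
  have hΦaff : ∀ t, nf t * df t0 - nf t0 * df t = (t - t0) * β := by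
    intro t
    rw [hβdef, hn t, hd t, hn t0, hd t0]
    ring
  have hΦle : ∀ t ∈ Set.Icc (t0-δ) (t0+δ), nf t * df t0 - nf t0 * df t ≤ 0 := by
    intro t ht
    have htin : t ∈ Set.Icc (0:ℝ) 1 := ⟨by linarith [ht.1], by linarith [ht.2]⟩
    have h1 : nf t / df t - nf t0 / df t0 ≤ 0 := sub_nonpos.mpr (hmax t ht)
    rw [div_sub_div _ _ (hne t htin) (hne t0 ht0mem)] at h1
    by_contra hcon
    push_neg at hcon
    have : 0 < (nf t * df t0 - df t * nf t0) / (df t * df t0) :=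
      div_pos (by linarith) (hsign t htin)
    linarith
  have hβ : β = 0 := by
    have h1 := hΦle (t0 + δ) ⟨by linarith, le_refl _⟩
    have h2 := hΦle (t0 - δ) ⟨le_refl _, by linarith⟩
    rw [hΦaff] at h1 h2
    have e1 : (t0 + δ - t0) * β = δ * β := by ring
    have e2 : (t0 - δ - t0) * β = -(δ * β) := by ring
    rw [e1] at h1; rw [e2] at h2
    nlinarith
  intro t ht
  have h0 : nf t * df t0 - nf t0 * df t = 0 := by rw [hΦaff, hβ]; ring
  rw [div_eq_div_iff (hne t ht) (hne t0 ht0mem)]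
  linarith


theorem local_improvement_interior
    (R S T P lam κX κY : ℝ) (hlam : lam ∈ Set.Ico (0:ℝ) 1)
    (p q pstar : Fin 5 → ℝ) (hp : ∀ i, p i ∈ Set.Ioo (0:ℝ) 1) (hq : inCube q)
    (V : (Fin 5 → ℝ) → ℝ)
    (hV : ∀ p', V p' = κX * pay lam p' q (uvecX R S T P) + κY * pay lam p' q (uvecY R S T P))
    (hstar : inCube pstar) (hbr : ∀ p', inCube p' → V p' ≤ V pstar)
    (hnotbr : V p < V pstar)
    (hmono : ∀ i : Fin 5,
      MonotoneOn (fun z => V (p + z • (Pi.single i 1 : Fin 5 → ℝ))) (Set.Icc (-(p i)) (1 - p i)) ∨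
      AntitoneOn (fun z => V (p + z • (Pi.single i 1 : Fin 5 → ℝ))) (Set.Icc (-(p i)) (1 - p i)))
    (hrat : ∃ Po Qo : Polynomial ℝ, (∀ z ∈ Set.Icc (0:ℝ) 1, Qo.eval z ≠ 0) ∧
      ∀ z ∈ Set.Icc (0:ℝ) 1, V ((1 - z) • p + z • pstar) = Po.eval z / Qo.eval z) :
    ∀ d > (0:ℝ), ∃ p', inCube p' ∧ (∀ i, |p' i - p i| < d) ∧ V p' > V p := by
  by_contra hcontra
  push_neg at hcontra
  obtain ⟨d, hd0, hcon⟩ := hcontra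
  have hne5 : (Finset.univ : Finset (Fin 5)).Nonempty := ⟨0, Finset.mem_univ 0⟩
  set m := Finset.univ.inf' hne5 (fun i => min (p i) (1 - p i)) with hmdef
  have hm0 : 0 < m := by
    rw [hmdef, Finset.lt_inf'_iff]
    intro i _
    exact lt_min (hp i).1 (by linarith [(hp i).2])
  have hmi : ∀ i, m ≤ p i ∧ m ≤ 1 - p i := by
    intro i
    have h : m ≤ min (p i) (1 - p i) :=
      Finset.inf'_le (fun j => min (p j) (1 - p j)) (Finset.mem_univ i)
    exact ⟨le_trans h (min_le_left _ _), le_trans h (min_le_right _ _)⟩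
  set δ := min (d/2) (m/2) with hδdef
  have hδ0 : 0 < δ := lt_min (by linarith) (by linarith)
  have hδd : δ < d := lt_of_le_of_lt (min_le_left _ _) (by linarith)
  have hδm : δ ≤ m / 2 := min_le_right _ _
  have hδp : ∀ i, 0 ≤ p i - δ ∧ p i + δ ≤ 1 := by
    intro i
    obtain ⟨h1, h2⟩ := hmi i
    exact ⟨by linarith, by linarith⟩
  have hboxcube : ∀ r : Fin 5 → ℝ, (∀ i, |r i - p i| ≤ δ) → inCube r := by
    intro r hb i
    have h := abs_le.mp (hb i)
    exact ⟨by linarith [(hδp i).1, h.1], by linarith [(hδp i).2, h.2]⟩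
  have hboxle : ∀ r : Fin 5 → ℝ, (∀ i, |r i - p i| ≤ δ) → V r ≤ V p := by
    intro r hb
    exact hcon r (hboxcube r hb) (fun i => lt_of_le_of_lt (hb i) hδd)
  have hVrepr : ∀ r : Fin 5 → ℝ, V r = nfunc lam κX κY R S T P q r / dfunc lam q r := by
    intro r; rw [hV r, V_repr]
  have key : ∀ k : ℕ, ∀ r : Fin 5 → ℝ, (∀ i, |r i - p i| ≤ δ) →
      (∀ i : Fin 5, k ≤ i.val → r i = p i) → V r = V p := by
    intro k
    induction k with
    | zero =>
      intro r _ htail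
      have h : r = p := funext fun i => htail i (Nat.zero_le _)
      rw [h]
    | succ k ih =>
      intro r hbox htail
      by_cases hk5 : k < 5
      · set ik : Fin 5 := ⟨k, hk5⟩ with hikdef
        have hbox' : ∀ i, |Function.update r ik (p ik) i - p i| ≤ δ := by
          intro i
          by_cases h : i = ik
          · subst h; rw [Function.update_self]; simpa using le_of_lt hδ0
          · rw [Function.update_of_ne h]; exact hbox i
        have htail' : ∀ i : Fin 5, k ≤ i.val → Function.update r ik (p ik) i = p i := by
          intro i hi
          by_cases h : i = ik
          · subst h; rw [Function.update_self]
          · rw [Function.update_of_ne h]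
            apply htail
            have hne : i.val ≠ k := fun hc => h (Fin.ext hc)
            omega
        have hVr' : V (Function.update r ik (p ik)) = V p := ih _ hbox' htail'
        obtain ⟨a₁, b₁, c₁, e₁, hnaff, hdaff⟩ := affine_nd lam κX κY R S T P q r ik
        have hupcube : ∀ t ∈ Set.Icc (0:ℝ) 1, inCube (Function.update r ik t) := by
          intro t ht i
          by_cases h : i = ik
          · subst h; rw [Function.update_self]; exact ht
          · rw [Function.update_of_ne h]; exact hboxcube r hbox i
        have hdne : ∀ t ∈ Set.Icc (0:ℝ) 1, dfunc lam q (Function.update r ik t) ≠ 0 := fun t ht =>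
          dfunc_ne_zero lam hlam.1 hlam.2 q _ (hupcube t ht) hq
        have hVt : ∀ t, V (Function.update r ik t)
            = nfunc lam κX κY R S T P q (Function.update r ik t) / dfunc lam q (Function.update r ik t) :=
          fun t => hVrepr _
        have hmax : ∀ t ∈ Set.Icc (p ik - δ) (p ik + δ),
            nfunc lam κX κY R S T P q (Function.update r ik t) / dfunc lam q (Function.update r ik t)
            ≤ nfunc lam κX κY R S T P q (Function.update r ik (p ik)) / dfunc lam q (Function.update r ik (p ik)) := by
          intro t ht
          have hb2 : ∀ i, |Function.update r ik t i - p i| ≤ δ := by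
            intro i
            by_cases h : i = ik
            · subst h; rw [Function.update_self, abs_le]
              exact ⟨by linarith [ht.1], by linarith [ht.2]⟩
            · rw [Function.update_of_ne h]; exact hbox i
          calc nfunc lam κX κY R S T P q (Function.update r ik t) / dfunc lam q (Function.update r ik t)
              = V (Function.update r ik t) := (hVt t).symm
          _ ≤ V p := hboxle _ hb2
          _ = V (Function.update r ik (p ik)) := hVr'.symm
          _ = _ := hVt (p ik)
        have hconst := mobius_key
          (fun t => nfunc lam κX κY R S T P q (Function.update r ik t))
          (fun t => dfunc lam q (Function.update r ik t))
          a₁ b₁ c₁ e₁ hnaff hdaff hdne (p ik) δ hδ0 (hδp ik).1 (hδp ik).2 hmax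
        have hrik : r ik ∈ Set.Icc (0:ℝ) 1 := hboxcube r hbox ik
        have hfinal := hconst (r ik) hrik
        have h3 : Function.update r ik (r ik) = r := Function.update_eq_self ik r
        have h4 := hVt (r ik)
        rw [h3] at h4
        have hfinal' : nfunc lam κX κY R S T P q (Function.update r ik (r ik))
              / dfunc lam q (Function.update r ik (r ik))
            = nfunc lam κX κY R S T P q (Function.update r ik (p ik))
              / dfunc lam q (Function.update r ik (p ik)) := hfinal
        rw [h3] at hfinal'
        rw [h4, hfinal', ← hVt (p ik), hVr']
      · apply ih r hbox
        intro i hi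
        exfalso
        have h5 := i.isLt
        omega
  have hbox_const : ∀ r : Fin 5 → ℝ, (∀ i, |r i - p i| ≤ δ) → V r = V p := by
    intro r hb
    exact key 5 r hb (fun i hi => absurd hi (Nat.not_le.mpr i.isLt))
  obtain ⟨Po, Qo, hQ, hPQ⟩ := hrat
  set ε := min δ 1 with hεdef
  have hε0 : 0 < ε := lt_min hδ0 one_pos
  have hε1 : ε ≤ 1 := min_le_right _ _
  have hεδ : ε ≤ δ := min_le_left _ _
  have hseg : ∀ z ∈ Set.Icc (0:ℝ) ε, V ((1 - z) • p + z • pstar) = V p := by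
    intro z hz
    apply hbox_const
    intro i
    have hdiff : ((1 - z) • p + z • pstar) i - p i = z * (pstar i - p i) := by
      simp only [Pi.add_apply, Pi.smul_apply, smul_eq_mul]
      ring
    rw [hdiff, abs_mul, abs_of_nonneg hz.1]
    have h1 : |pstar i - p i| ≤ 1 := abs_le.mpr
      ⟨by linarith [(hstar i).1, (hp i).2], by linarith [(hstar i).2, (hp i).1]⟩
    calc z * |pstar i - p i| ≤ z * 1 := mul_le_mul_of_nonneg_left h1 hz.1
    _ = z := mul_one z
    _ ≤ δ := le_trans hz.2 hεδ
  have hPz : ∀ z ∈ Set.Icc (0:ℝ) ε, Po.eval z = V p * Qo.eval z := by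
    intro z hz
    have hz01 : z ∈ Set.Icc (0:ℝ) 1 := ⟨hz.1, le_trans hz.2 hε1⟩
    have h1 := hPQ z hz01
    rw [hseg z hz] at h1
    rw [eq_div_iff (hQ z hz01)] at h1
    linarith [h1]
  have hpoly : Po - Polynomial.C (V p) * Qo = 0 := by
    apply Polynomial.eq_zero_of_infinite_isRoot
    apply Set.Infinite.mono (s := Set.Icc (0:ℝ) ε)
    · intro z hz
      simp only [Set.mem_setOf_eq, Polynomial.IsRoot, Polynomial.eval_sub,
        Polynomial.eval_mul, Polynomial.eval_C]
      rw [hPz z hz]; ring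
    · exact Set.Icc_infinite hε0
  have h1mem : (1:ℝ) ∈ Set.Icc (0:ℝ) 1 := ⟨zero_le_one, le_refl _⟩
  have heval1 : Po.eval 1 = V p * Qo.eval 1 := by
    have h6 := congrArg (Polynomial.eval 1) hpoly
    simp only [Polynomial.eval_sub, Polynomial.eval_mul, Polynomial.eval_C,
      Polynomial.eval_zero] at h6
    linarith
  have hVstar : V pstar = V p := by
    have h2 := hPQ 1 h1mem
    have h3 : ((1:ℝ) - 1) • p + (1:ℝ) • pstar = pstar := by
      simp
    rw [h3] at h2
    rw [h2, heval1, mul_div_assoc, div_self (hQ 1 h1mem), mul_one]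
  linarith [hnotbr, hVstar]
end
end

section
/- Suppose player X's objective is fairness V(p,q) = -|π_X(p,q) - π_Y(p,q)|, with p ∈ (0,1)⁵, q ∈ [0,1]⁵, and assume the local-improvement property holds for weighted payoff objectives (as in the interior local-improvement proposition). If player X cannot locally improve its fairness objective, then the payoffs must already be equal: π_X(p,q) = π_Y(p,q). -/
open Matrix Filter

noncomputable section

/- If `D = π_X - π_Y` does not vanish at `p`, use the weights `κ = (-D(p), D(p))`, whose objective
is `-D(p) · D`. Symmetric play gives `D = 0` at `p' = q`, so `q` beats `p` for this objective and
improvements exist arbitrarily close to `p`. Near `p`, `D` keeps the sign of `D(p)` by continuity,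
and there an improvement of `-D(p) · D` strictly decreases `|D|`, i.e. improves fairness. -/

lemma row2_nonneg {a b : ℝ} (ha : a ∈ Set.Icc (0:ℝ) 1) (hb : b ∈ Set.Icc (0:ℝ) 1) (j : Fin 4) :
    0 ≤ row2 a b j := by
  obtain ⟨ha0, ha1⟩ := ha
  obtain ⟨hb0, hb1⟩ := hb
  fin_cases j <;> simp [row2] <;> nlinarith

lemma sum_row2 (a b : ℝ) : ∑ j, row2 a b j = 1 := by
  simp [row2, Fin.sum_univ_four]
  ring

lemma Mmat_nonneg {p q : Fin 5 → ℝ} (hp : inCube p) (hq : inCube q) (i j : Fin 4) :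
    0 ≤ Mmat p q i j := by
  fin_cases i <;> exact row2_nonneg (hp _) (hq _) j

lemma sum_Mmat_row (p q : Fin 5 → ℝ) (i : Fin 4) : ∑ j, Mmat p q i j = 1 := by
  fin_cases i <;> exact sum_row2 _ _

lemma det_one_sub_smul_ne_zero_s8 {n : Type*} [Fintype n] [DecidableEq n] {M : Matrix n n ℝ}
    (hM : ∀ i j, 0 ≤ M i j) (hsum : ∀ i, ∑ j, M i j ≤ 1) {lam : ℝ} (hlam : lam ∈ Set.Ico (0:ℝ) 1) :
    (1 - lam • M).det ≠ 0 := by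
  refine det_ne_zero_of_sum_row_lt_diag fun k => ?_
  have hoff : ∑ j ∈ Finset.univ.erase k, ‖(1 - lam • M) k j‖ = lam * (∑ j, M k j - M k k) := by
    rw [← Finset.sum_erase_eq_sub (Finset.mem_univ k), Finset.mul_sum]
    refine Finset.sum_congr rfl fun j hj => ?_
    rw [Matrix.sub_apply, one_apply_ne (Finset.ne_of_mem_erase hj).symm, Matrix.smul_apply,
      smul_eq_mul, zero_sub, norm_neg, Real.norm_eq_abs, abs_of_nonneg (mul_nonneg hlam.1 (hM k j))]
  have hdiag : 1 - lam * M k k ≤ ‖(1 - lam • M) k k‖ := by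
    rw [Matrix.sub_apply, one_apply_eq, Matrix.smul_apply, smul_eq_mul, Real.norm_eq_abs]
    exact le_abs_self _
  rw [hoff]
  nlinarith [hsum k, hlam.1, hlam.2, hM k k]

lemma det_one_sub_smul_Mmat_ne_zero {lam : ℝ} (hlam : lam ∈ Set.Ico (0:ℝ) 1)
    {p q : Fin 5 → ℝ} (hp : inCube p) (hq : inCube q) : (1 - lam • Mmat p q).det ≠ 0 :=
  det_one_sub_smul_ne_zero_s8 (Mmat_nonneg hp hq) (fun i => (sum_Mmat_row p q i).le) hlam

lemma continuous_Mmat (q : Fin 5 → ℝ) : Continuous fun p : Fin 5 → ℝ => Mmat p q := by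
  refine continuous_matrix fun i j => ?_
  fin_cases i <;> fin_cases j <;> (simp [Mmat, row2]; fun_prop)

lemma continuous_nu0 (q : Fin 5 → ℝ) : Continuous fun p : Fin 5 → ℝ => nu0 p q := by
  refine continuous_pi fun i => ?_
  fin_cases i <;> (simp [nu0, row2]; fun_prop)

lemma continuousAt_pay {lam : ℝ} {p q : Fin 5 → ℝ} (u : Fin 4 → ℝ)
    (hdet : (1 - lam • Mmat p q).det ≠ 0) :
    ContinuousAt (fun p' => pay lam p' q u) p := by
  have hA : Continuous fun p' : Fin 5 → ℝ => (1 : Matrix (Fin 4) (Fin 4) ℝ) - lam • Mmat p' q :=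
    continuous_const.sub ((continuous_Mmat q).const_smul lam)
  have hdetinv : ContinuousAt Ring.inverse (1 - lam • Mmat p q).det := by
    rw [Ring.inverse_eq_inv']
    exact continuousAt_inv₀ hdet
  have hinv : ContinuousAt (fun p' => (1 - lam • Mmat p' q)⁻¹) p :=
    Filter.Tendsto.comp (continuousAt_matrix_inv _ hdetinv) hA.continuousAt
  have hg : Continuous fun x : (Fin 4 → ℝ) × Matrix (Fin 4) (Fin 4) ℝ =>
      ((1 - lam) • (x.1 ᵥ* x.2)) ⬝ᵥ u :=
    ((continuous_fst.matrix_vecMul continuous_snd).const_smul (1 - lam)).dotProduct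
      continuous_const
  have := hg.continuousAt.comp ((continuous_nu0 q).continuousAt.prodMk hinv)
  simp only [pay, vdist]
  exact this

lemma vecMul_inv_comp_equiv {n : Type*} [Fintype n] [DecidableEq n] {ν : n → ℝ}
    {A : Matrix n n ℝ} (σ : n ≃ n) (hν : ν ∘ σ = ν) (hA : A.submatrix σ σ = A) :
    (ν ᵥ* A⁻¹) ∘ σ = ν ᵥ* A⁻¹ := by
  have hν' : ν ∘ σ.symm = ν := by
    conv_lhs => rw [← hν]
    ext; simp
  conv_rhs => rw [← hA, inv_submatrix_equiv, submatrix_vecMul_equiv, hν']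

/-- Against itself, a strategy induces a distribution invariant under swapping the states
`CD` and `DC`, which exchanges the two players' payoff vectors. -/
lemma pay_self_uvecX_eq_uvecY (lam R S T P : ℝ) (q : Fin 5 → ℝ) :
    pay lam q q (uvecX R S T P) = pay lam q q (uvecY R S T P) := by
  set σ : Fin 4 ≃ Fin 4 := Equiv.swap 1 2
  have hM : (Mmat q q).submatrix σ σ = Mmat q q := by
    ext i j
    fin_cases i <;> fin_cases j <;> simp [σ, Equiv.swap_apply_def, Mmat, row2] <;> ring
  have hν : nu0 q q ∘ σ = nu0 q q := by
    ext i
    fin_cases i <;> simp [σ, Equiv.swap_apply_def, nu0, row2] <;> ring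
  have hA : (1 - lam • Mmat q q).submatrix σ σ = 1 - lam • Mmat q q := by
    change (1 : Matrix (Fin 4) (Fin 4) ℝ).submatrix σ σ - lam • (Mmat q q).submatrix σ σ = _
    rw [submatrix_one_equiv, hM]
  have hu : uvecY R S T P = uvecX R S T P ∘ σ := by
    ext j
    fin_cases j <;> simp [σ, Equiv.swap_apply_def, uvecX, uvecY]
  have hv : vdist lam q q ∘ σ = vdist lam q q := by
    ext j
    have h := congrFun (vecMul_inv_comp_equiv σ hν hA) j
    simp only [Function.comp_apply] at h
    simp only [vdist, Function.comp_apply, Pi.smul_apply, h]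
  rw [pay, pay, hu, ← hv, comp_equiv_dotProduct_comp_equiv, hv]

lemma abs_lt_abs_of_mul_pos_of_mul_lt_sq {a b : ℝ} (hpos : 0 < a * b) (hlt : a * b < a ^ 2) :
    |b| < |a| := by
  rcases lt_or_gt_of_ne (left_ne_zero_of_mul hpos.ne') with ha | ha
  · have hb : b < 0 := neg_of_mul_pos_right hpos ha.le
    rw [abs_of_neg ha, abs_of_neg hb]
    nlinarith
  · have hb : 0 < b := pos_of_mul_pos_right hpos ha.le
    rw [abs_of_pos ha, abs_of_pos hb]
    nlinarith

theorem fairness_rest_point_equal_payoffs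
    (R S T P lam : ℝ) (hlam : lam ∈ Set.Ico (0:ℝ) 1)
    (p q : Fin 5 → ℝ) (hp : ∀ i, p i ∈ Set.Ioo (0:ℝ) 1) (hq : inCube q)
    (hLI : ∀ κX κY : ℝ, ∀ p₁ : Fin 5 → ℝ, (∀ i, p₁ i ∈ Set.Ioo (0:ℝ) 1) →
      (∃ pb, inCube pb ∧
        κX * pay lam p₁ q (uvecX R S T P) + κY * pay lam p₁ q (uvecY R S T P) <
          κX * pay lam pb q (uvecX R S T P) + κY * pay lam pb q (uvecY R S T P)) →
      ∀ d > (0:ℝ), ∃ p₂, inCube p₂ ∧ (∀ i, |p₂ i - p₁ i| < d) ∧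
        κX * pay lam p₁ q (uvecX R S T P) + κY * pay lam p₁ q (uvecY R S T P) <
          κX * pay lam p₂ q (uvecX R S T P) + κY * pay lam p₂ q (uvecY R S T P))
    (hno : ∃ d₀ > (0:ℝ), ∀ p', inCube p' → (∀ i, |p' i - p i| < d₀) →
      -|pay lam p' q (uvecX R S T P) - pay lam p' q (uvecY R S T P)| ≤
        -|pay lam p q (uvecX R S T P) - pay lam p q (uvecY R S T P)|) :
    pay lam p q (uvecX R S T P) = pay lam p q (uvecY R S T P) := by
  set D := fun p' => pay lam p' q (uvecX R S T P) - pay lam p' q (uvecY R S T P)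
  by_contra hne
  have hDp : D p ≠ 0 := sub_ne_zero.mpr hne
  have hDq : D q = 0 := sub_eq_zero.mpr (pay_self_uvecX_eq_uvecY lam R S T P q)
  have hdet := det_one_sub_smul_Mmat_ne_zero hlam (fun i => Set.Ioo_subset_Icc_self (hp i)) hq
  have hcont : ContinuousAt (fun p' => D p * D p') p :=
    continuousAt_const.mul ((continuousAt_pay _ hdet).sub (continuousAt_pay _ hdet))
  obtain ⟨δ, hδ, hsign⟩ := Metric.eventually_nhds_iff.mp
    (hcont.eventually (lt_mem_nhds (mul_self_pos.mpr hDp)))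
  obtain ⟨d₀, hd₀, hno⟩ := hno
  obtain ⟨p₂, hp₂, hclose, himp⟩ := hLI (-D p) (D p) p hp
    ⟨q, hq, by linear_combination (D p) * hDq + mul_self_pos.mpr hDp⟩ (min δ d₀) (lt_min hδ hd₀)
  have hdist : dist p₂ p < δ :=
    (dist_pi_lt_iff hδ).mpr fun i => (hclose i).trans_le (min_le_left _ _)
  have hfair := hno p₂ hp₂ fun i => (hclose i).trans_le (min_le_right _ _)
  have hlt : D p * D p₂ < D p ^ 2 := by linear_combination himp
  linarith [abs_lt_abs_of_mul_pos_of_mul_lt_sq (hsign hdist) hlt]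
end
end

section
/- For the death-birth modified payoffs on a k-regular graph (k > 2), define ã_ij = a_ij + ((k+1)a_ii + a_ij - a_ji - (k+1)a_jj)/((k+1)(k-2)). Then the modified payoff differences satisfy ã_FF - ã_SF = (1 + 1/((k+1)(k-2)))(a_FF - a_SF) + (1/((k+1)(k-2)))(a_FS - a_SS) + (k/((k+1)(k-2)))(a_FF - a_SS), and ã_FS - ã_SS = (1 + 1/((k+1)(k-2)))(a_FS - a_SS) + (1/((k+1)(k-2)))(a_FF - a_SF) + (k/((k+1)(k-2)))(a_FF - a_SS). Consequently, if a_FF ≥ a_SF, a_FS ≥ a_SS (one strict) and a_FF > a_SS, then ã_FF > ã_SF and ã_FS > ã_SS, so global stability of F in the well-mixed population implies global stability on the regular graph. -/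
theorem death_birth_modified_payoffs
    (k : ℕ) (hk : 2 < k) (aFF aFS aSF aSS : ℝ)
    (tFF tFS tSF tSS : ℝ)
    (htFF : tFF = aFF + (((k:ℝ) + 1) * aFF + aFF - aFF - ((k:ℝ) + 1) * aFF) / (((k:ℝ) + 1) * ((k:ℝ) - 2)))
    (htFS : tFS = aFS + (((k:ℝ) + 1) * aFF + aFS - aSF - ((k:ℝ) + 1) * aSS) / (((k:ℝ) + 1) * ((k:ℝ) - 2)))
    (htSF : tSF = aSF + (((k:ℝ) + 1) * aSS + aSF - aFS - ((k:ℝ) + 1) * aFF) / (((k:ℝ) + 1) * ((k:ℝ) - 2)))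
    (htSS : tSS = aSS + (((k:ℝ) + 1) * aSS + aSS - aSS - ((k:ℝ) + 1) * aSS) / (((k:ℝ) + 1) * ((k:ℝ) - 2))) :
    (tFF - tSF =
      (1 + 1 / (((k:ℝ) + 1) * ((k:ℝ) - 2))) * (aFF - aSF)
        + (1 / (((k:ℝ) + 1) * ((k:ℝ) - 2))) * (aFS - aSS)
        + ((k:ℝ) / (((k:ℝ) + 1) * ((k:ℝ) - 2))) * (aFF - aSS)) ∧
    (tFS - tSS =
      (1 + 1 / (((k:ℝ) + 1) * ((k:ℝ) - 2))) * (aFS - aSS)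
        + (1 / (((k:ℝ) + 1) * ((k:ℝ) - 2))) * (aFF - aSF)
        + ((k:ℝ) / (((k:ℝ) + 1) * ((k:ℝ) - 2))) * (aFF - aSS)) ∧
    (aFF ≥ aSF → aFS ≥ aSS → (aFF > aSF ∨ aFS > aSS) → aFF > aSS →
      tFF > tSF ∧ tFS > tSS) := by
  have hk' : (2:ℝ) < (k:ℝ) := by exact_mod_cast hk
  have hD : (0:ℝ) < ((k:ℝ) + 1) * ((k:ℝ) - 2) := by nlinarith
  have hD' : ((k:ℝ) + 1) * ((k:ℝ) - 2) ≠ 0 := ne_of_gt hD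
  have h1 : tFF - tSF =
      (1 + 1 / (((k:ℝ) + 1) * ((k:ℝ) - 2))) * (aFF - aSF)
        + (1 / (((k:ℝ) + 1) * ((k:ℝ) - 2))) * (aFS - aSS)
        + ((k:ℝ) / (((k:ℝ) + 1) * ((k:ℝ) - 2))) * (aFF - aSS) := by
    rw [htFF, htSF]; field_simp; ring
  have h2 : tFS - tSS =
      (1 + 1 / (((k:ℝ) + 1) * ((k:ℝ) - 2))) * (aFS - aSS)
        + (1 / (((k:ℝ) + 1) * ((k:ℝ) - 2))) * (aFF - aSF)
        + ((k:ℝ) / (((k:ℝ) + 1) * ((k:ℝ) - 2))) * (aFF - aSS) := by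
    rw [htFS, htSS]; field_simp; ring
  refine ⟨h1, h2, fun hge1 hge2 hstr hgt => ?_⟩
  have hpos : 0 < 1 / (((k:ℝ) + 1) * ((k:ℝ) - 2)) := by positivity
  have hkpos : 0 < (k:ℝ) / (((k:ℝ) + 1) * ((k:ℝ) - 2)) := by positivity
  constructor
  · have : tFF - tSF > 0 := by
      rw [h1]
      have : (0:ℝ) < ((k:ℝ) / (((k:ℝ) + 1) * ((k:ℝ) - 2))) * (aFF - aSS) := by
        apply mul_pos hkpos; linarith
      nlinarith [mul_nonneg hpos.le (sub_nonneg.2 hge1), mul_nonneg hpos.le (sub_nonneg.2 hge2),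
        mul_nonneg (sub_nonneg.2 hge1) (le_of_lt hpos)]
    linarith
  · have : tFS - tSS > 0 := by
      rw [h2]
      have : (0:ℝ) < ((k:ℝ) / (((k:ℝ) + 1) * ((k:ℝ) - 2))) * (aFF - aSS) := by
        apply mul_pos hkpos; linarith
      nlinarith [mul_nonneg hpos.le (sub_nonneg.2 hge1), mul_nonneg hpos.le (sub_nonneg.2 hge2)]
    linarith
end
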